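/- For every α ∈ (0,1) the following hold: (i) cosh²(u) − 2α·sinh(u) = 0 if and only if sinh(u) = α + i·√(1−α²) or sinh(u) = α − i·√(1−α²); (ii) the equation sinh(u) = α + i·√(1−α²) has exactly two solutions ρ₋, ρ₊ in the strip {u ∈ ℂ : 0 < Im u < π}, and they satisfy 0 < Im ρ₋ < π/2 < Im ρ₊ < π; (iii) every zero of cosh²(u) − 2α·sinh(u) in the strip {0 < Im u < π} equals ρ₋ or ρ₊, and each of ρ₋, ρ₊ is a pole of order exactly 2 of the meromorphic function β(u) = sinh(u)·cosh(u)/(cosh²(u) − 2α·sinh(u))². -/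

import Mathlib

/-!
The denominator factors as `cosh² u - 2α sinh u = (sinh u - s)(sinh u - s̄)` with
`s = α + i√(1 - α²)`. On the strip `0 < Im u < π` the imaginary part `cosh (Re u) sin (Im u)` of
`sinh u` is positive, so only `sinh u = s` has solutions there; as `sinh u = -i sin (iu)`, the
solutions of `sinh u = sinh ρ` are `ρ + 2kπi` and `(2k + 1)πi - ρ`, and only `ρ` and `πi - ρ`
lie in the strip. At a zero the derivative `2 cosh u (sinh u - α)` and the numerator
`sinh u cosh u` do not vanish, so each zero is simple and `β` has a pole of order exactly two.
-/

noncomputable section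

open Filter Set Topology

/-- The meromorphic function `β(u) = sinh u · cosh u / (cosh² u − 2α sinh u)²`. -/
def betaC (α : ℝ) (u : ℂ) : ℂ :=
  Complex.sinh u * Complex.cosh u / (Complex.cosh u ^ 2 - 2 * (α : ℂ) * Complex.sinh u) ^ 2

theorem exists_analyticAt_div_sq_eq_div_sub_sq {𝕜 : Type*} [NontriviallyNormedField 𝕜]
    {f D : 𝕜 → 𝕜} {ρ : 𝕜} (hf : AnalyticAt 𝕜 f ρ) (hfρ : f ρ ≠ 0) (hD : AnalyticAt 𝕜 D ρ)
    (hDρ : D ρ = 0) (hD' : deriv D ρ ≠ 0) :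
    ∃ g : 𝕜 → 𝕜, AnalyticAt 𝕜 g ρ ∧ g ρ ≠ 0 ∧
      ∀ᶠ u in 𝓝[≠] ρ, f u / D u ^ 2 = g u / (u - ρ) ^ 2 := by
  obtain ⟨h, hh, hhρ, hDh⟩ :=
    hD.analyticOrderAt_eq_natCast.mp (hD.analyticOrderAt_eq_one_of_zero_deriv_ne_zero hDρ hD')
  refine ⟨fun u => f u / h u ^ 2, hf.div (hh.pow 2) (pow_ne_zero 2 hhρ),
    div_ne_zero hfρ (pow_ne_zero 2 hhρ), ?_⟩
  filter_upwards [nhdsWithin_le_nhds hDh] with u hu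
  rw [hu, pow_one, smul_eq_mul, mul_pow, div_div, mul_comm]

open scoped Real

namespace Complex

theorem sinh_add_mul_I (x y : ℂ) : sinh (x + y * I) = sinh x * cos y + cosh x * sin y * I := by
  rw [sinh_add, sinh_mul_I, cosh_mul_I, mul_assoc]

theorem sinh_pi_mul_I_sub (z : ℂ) : sinh (π * I - z) = sinh z := by
  rw [← neg_sub, sinh_neg, sinh_sub_pi_mul_I, neg_neg]

theorem sinh_im_pos {z : ℂ} (h0 : 0 < z.im) (hπ : z.im < π) : 0 < (sinh z).im := by
  rw [← re_add_im z, sinh_add_mul_I]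
  simpa [mul_im, ← ofReal_sinh, ← ofReal_cosh, ← ofReal_cos, ← ofReal_sin] using
    mul_pos (Real.cosh_pos z.re) (Real.sin_pos_of_pos_of_lt_pi h0 hπ)

theorem eq_or_eq_pi_mul_I_sub_of_sinh_eq {u v : ℂ} (hu0 : 0 < u.im) (huπ : u.im < π)
    (hv0 : 0 < v.im) (hvπ : v.im < π) (h : sinh u = sinh v) : u = v ∨ u = π * I - v := by
  have hsin : sin (v * I) = sin (u * I) := by rw [sin_mul_I, sin_mul_I, h]
  obtain ⟨k, hk | hk⟩ := sin_eq_sin_iff.mp hsin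
  · have hre : -u.im = 2 * k * π + -v.im := by simpa using congrArg re hk
    have hk0 : k = 0 := by
      have : -1 < 2 * (k : ℝ) ∧ 2 * (k : ℝ) < 1 := by
        constructor <;> nlinarith [Real.pi_pos]
      have : -1 < 2 * k ∧ 2 * k < 1 := by exact_mod_cast this
      omega
    left
    subst hk0
    simpa using hk
  · have hre : -u.im = (2 * k + 1) * π + v.im := by simpa using congrArg re hk
    have hk1 : k = -1 := by
      have : -2 < 2 * (k : ℝ) + 1 ∧ 2 * (k : ℝ) + 1 < 0 := by
        constructor <;> nlinarith [Real.pi_pos]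
      have : -2 < 2 * k + 1 ∧ 2 * k + 1 < 0 := by exact_mod_cast this
      omega
    right
    subst hk1
    linear_combination (-I) * hk + (u + v) * I_sq

end Complex

open Complex

theorem cosh_sq_sub_two_mul_sinh_eq_mul (a b u : ℂ) (hb : b ^ 2 = 1 - a ^ 2) :
    cosh u ^ 2 - 2 * a * sinh u = (sinh u - (a + I * b)) * (sinh u - (a - I * b)) := by
  linear_combination cosh_sq u - hb + b ^ 2 * I_sq

/-- In `sinh (x + iy) = sinh x cos y + i cosh x sin y`, the choice `sinh x = cos y = √α` makes the
real part `α` and the imaginary part `√(1 + α) √(1 - α)`. -/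
theorem exists_sinh_eq_ofReal_add_I_mul_sqrt {α : ℝ} (hα0 : 0 < α) (hα1 : α < 1) :
    ∃ ρ : ℂ, sinh ρ = α + I * √(1 - α ^ 2) ∧ 0 < ρ.im ∧ ρ.im < π / 2 := by
  have hs0 : 0 < √α := Real.sqrt_pos.mpr hα0
  have hs1 : √α < 1 := (Real.sqrt_lt' one_pos).mpr (by simpa using hα1)
  refine ⟨Real.arsinh √α + Real.arccos √α * I, ?_, by simpa using Real.arccos_pos.mpr hs1,
    by simpa using Real.arccos_lt_pi_div_two.mpr hs0⟩
  have hsqrt : √(1 + α) * √(1 - α) = √(1 - α ^ 2) := by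
    rw [← Real.sqrt_mul (by linarith)]; ring_nf
  rw [sinh_add_mul_I, ← ofReal_sinh, ← ofReal_cosh, ← ofReal_cos, ← ofReal_sin,
    Real.sinh_arsinh, Real.cosh_arsinh, Real.cos_arccos (by linarith) hs1.le, Real.sin_arccos,
    Real.sq_sqrt hα0.le, ← ofReal_mul, Real.mul_self_sqrt hα0.le, ← ofReal_mul, hsqrt, mul_comm]

theorem exists_analyticAt_betaC_eq_div_sub_sq {α : ℝ} (hα0 : α ≠ 0) (hα1 : α ^ 2 ≠ 1) {ρ : ℂ}
    (hρ : cosh ρ ^ 2 - 2 * α * sinh ρ = 0) :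
    ∃ g : ℂ → ℂ, AnalyticAt ℂ g ρ ∧ g ρ ≠ 0 ∧
      ∀ᶠ u in 𝓝[≠] ρ, betaC α u = g u / (u - ρ) ^ 2 := by
  have hα0' : (α : ℂ) ≠ 0 := ofReal_ne_zero.mpr hα0
  -- `cosh² ρ = 2α sinh ρ` and `cosh² ρ - sinh² ρ = 1` exclude `sinh ρ ∈ {0, α}` and `cosh ρ = 0`.
  have hsinh : sinh ρ ≠ 0 := fun h => (one_ne_zero : (1 : ℂ) ≠ 0) <| by
    linear_combination -(cosh_sq_sub_sinh_sq ρ) + hρ - (sinh ρ - 2 * α) * h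
  have hcosh : cosh ρ ≠ 0 := fun h =>
    hsinh <| (mul_eq_zero.mp (by linear_combination cosh ρ * h - hρ)).resolve_left
      (mul_ne_zero two_ne_zero hα0')
  have hsinh_sub : sinh ρ - α ≠ 0 := fun h => by
    have : (α : ℂ) ^ 2 = 1 := by
      linear_combination cosh_sq_sub_sinh_sq ρ - hρ + (sinh ρ - α) * h
    exact hα1 (by exact_mod_cast this)
  have hD : HasDerivAt (fun u => cosh u ^ 2 - 2 * α * sinh u)
      (2 * cosh ρ * (sinh ρ - α)) ρ := by
    refine (((hasDerivAt_cosh ρ).fun_pow 2).fun_sub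
      ((hasDerivAt_sinh ρ).const_mul (2 * (α : ℂ)))).congr_deriv ?_
    push_cast
    ring
  exact exists_analyticAt_div_sq_eq_div_sub_sq (by fun_prop) (mul_ne_zero hsinh hcosh)
    (by fun_prop) hρ (hD.deriv ▸ mul_ne_zero (mul_ne_zero two_ne_zero hcosh) hsinh_sub)

/-- for every `α ∈ (0,1)`:
(i) `cosh²u − 2α·sinh u = 0` iff `sinh u = α ± i√(1−α²)`;
(ii) the equation `sinh u = α + i√(1−α²)` has exactly two solutions `ρ₋, ρ₊` in the strip
`0 < Im u < π`, with `0 < Im ρ₋ < π/2 < Im ρ₊ < π`;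
(iii) every zero of `cosh²u − 2α·sinh u` in the strip equals `ρ₋` or `ρ₊`, and each of
`ρ₋, ρ₊` is a pole of order exactly `2` of `β`. -/
theorem stmt0 (α : ℝ) (hα0 : 0 < α) (hα1 : α < 1) :
    (∀ u : ℂ, Complex.cosh u ^ 2 - 2 * (α : ℂ) * Complex.sinh u = 0 ↔
      (Complex.sinh u = (α : ℂ) + Complex.I * (Real.sqrt (1 - α ^ 2) : ℂ) ∨
        Complex.sinh u = (α : ℂ) - Complex.I * (Real.sqrt (1 - α ^ 2) : ℂ))) ∧
    (∃ ρm ρp : ℂ,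
      Complex.sinh ρm = (α : ℂ) + Complex.I * (Real.sqrt (1 - α ^ 2) : ℂ) ∧
      Complex.sinh ρp = (α : ℂ) + Complex.I * (Real.sqrt (1 - α ^ 2) : ℂ) ∧
      0 < ρm.im ∧ ρm.im < Real.pi / 2 ∧ Real.pi / 2 < ρp.im ∧ ρp.im < Real.pi ∧
      (∀ u : ℂ, 0 < u.im → u.im < Real.pi →
        Complex.sinh u = (α : ℂ) + Complex.I * (Real.sqrt (1 - α ^ 2) : ℂ) →
        u = ρm ∨ u = ρp) ∧
      (∀ u : ℂ, 0 < u.im → u.im < Real.pi →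
        Complex.cosh u ^ 2 - 2 * (α : ℂ) * Complex.sinh u = 0 → u = ρm ∨ u = ρp) ∧
      (∀ ρ : ℂ, ρ = ρm ∨ ρ = ρp →
        ∃ g : ℂ → ℂ, AnalyticAt ℂ g ρ ∧ g ρ ≠ 0 ∧
          ∀ᶠ u in nhdsWithin ρ {ρ}ᶜ, betaC α u = g u / (u - ρ) ^ 2)) := by
  have hb : ((√(1 - α ^ 2) : ℝ) : ℂ) ^ 2 = 1 - (α : ℂ) ^ 2 := by
    rw [← ofReal_pow, Real.sq_sqrt (by nlinarith)]; push_cast; ring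
  have hzero_iff (u : ℂ) : cosh u ^ 2 - 2 * α * sinh u = 0 ↔
      sinh u = α + I * √(1 - α ^ 2) ∨ sinh u = α - I * √(1 - α ^ 2) := by
    rw [cosh_sq_sub_two_mul_sinh_eq_mul _ _ u hb, mul_eq_zero, sub_eq_zero, sub_eq_zero]
  obtain ⟨ρ, hρ, hρ0, hρπ⟩ := exists_sinh_eq_ofReal_add_I_mul_sqrt hα0 hα1
  have hρ' : sinh (π * I - ρ) = α + I * √(1 - α ^ 2) := (sinh_pi_mul_I_sub ρ).trans hρ
  have hρ'_im : (π * I - ρ).im = π - ρ.im := by simp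
  have hsolutions (u : ℂ) (hu0 : 0 < u.im) (huπ : u.im < π)
      (hu : sinh u = α + I * √(1 - α ^ 2)) : u = ρ ∨ u = π * I - ρ :=
    eq_or_eq_pi_mul_I_sub_of_sinh_eq hu0 huπ hρ0 (by linarith) (hu.trans hρ.symm)
  refine ⟨hzero_iff, ρ, π * I - ρ, hρ, hρ', hρ0, hρπ, by linarith, by linarith, hsolutions,
    fun u hu0 huπ hu => ?_, ?_⟩
  · refine hsolutions u hu0 huπ (((hzero_iff u).mp hu).resolve_right fun h => ?_)
    have : (sinh u).im ≤ 0 := by simp [h]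
    exact (sinh_im_pos hu0 huπ).not_ge this
  · rintro ρ' (rfl | rfl) <;> refine exists_analyticAt_betaC_eq_div_sub_sq hα0.ne'
      (by nlinarith) ((hzero_iff _).mpr (.inl ?_))
    exacts [hρ, hρ']
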